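/- Let v be a vertex of a finite simple graph G that is not simplicial (i.e., v belongs to more than one maximal clique, equivalently some two neighbors of v are non-adjacent). Then the binomial edge ideal satisfies J_G = (J_{G\v} + (x_v, y_v)) ∩ J_{G_v}. -/
import Mathlib


open MvPolynomial

/-- The binomial edge ideal `J_G` of a graph `G` on `[n]`, in
`K[x_1,…,x_n,y_1,…,y_n]`: generated by `x_i y_j − x_j y_i` for edges `{i,j}` with `i < j`.
The `x`-variables are indexed by `Sum.inl`, the `y`-variables by `Sum.inr`. -/
noncomputable def binomialEdgeIdeal (K : Type*) [Field K] {n : ℕ} (G : SimpleGraph (Fin n)) :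
    Ideal (MvPolynomial (Fin n ⊕ Fin n) K) :=
  Ideal.span {f | ∃ i j : Fin n, i < j ∧ G.Adj i j ∧
    f = X (Sum.inl i) * X (Sum.inr j) - X (Sum.inl j) * X (Sum.inr i)}

section Aux

variable {K : Type} [Field K] {n : ℕ}

/-- The binomial of any adjacent pair lies in the binomial edge ideal, regardless of order. -/
lemma BEI.gen_mem {G : SimpleGraph (Fin n)} {a b : Fin n} (h : G.Adj a b) :
    X (Sum.inl a) * X (Sum.inr b) - X (Sum.inl b) * X (Sum.inr a) ∈ binomialEdgeIdeal K G := by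
  rcases h.ne.lt_or_gt with hab | hba
  · exact Ideal.subset_span ⟨a, b, hab, h, rfl⟩
  · have e : (X (Sum.inl a) * X (Sum.inr b) - X (Sum.inl b) * X (Sum.inr a)
        : MvPolynomial (Fin n ⊕ Fin n) K)
        = -(X (Sum.inl b) * X (Sum.inr a) - X (Sum.inl a) * X (Sum.inr b)) := by ring
    rw [e]
    exact neg_mem (Ideal.subset_span ⟨b, a, hba, h.symm, rfl⟩)

/-- The substitution `x_v ↦ 0, y_v ↦ 0`. -/
noncomputable def BEI.sub0 (v : Fin n) :
    MvPolynomial (Fin n ⊕ Fin n) K →ₐ[K] MvPolynomial (Fin n ⊕ Fin n) K :=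
  aeval (fun i => if i = Sum.inl v ∨ i = Sum.inr v then 0 else X i)

lemma BEI.sub0_X (v : Fin n) (i : Fin n ⊕ Fin n) :
    BEI.sub0 (K := K) v (X i) = if i = Sum.inl v ∨ i = Sum.inr v then 0 else X i := by
  simp [BEI.sub0]

lemma BEI.sub_sub0_mem (v : Fin n) (f : MvPolynomial (Fin n ⊕ Fin n) K) :
    f - BEI.sub0 v f ∈ Ideal.span {X (Sum.inl v), X (Sum.inr v)} := by
  induction f using MvPolynomial.induction_on with
  | C a => simp [BEI.sub0]
  | add p q hp hq =>
      have e : p + q - BEI.sub0 v (p + q) = (p - BEI.sub0 v p) + (q - BEI.sub0 v q) := by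
        rw [map_add]; ring
      rw [e]; exact add_mem hp hq
  | mul_X p i hp =>
      rw [map_mul, BEI.sub0_X]
      by_cases hi : i = Sum.inl v ∨ i = Sum.inr v
      · rw [if_pos hi, mul_zero, sub_zero]
        refine Ideal.mul_mem_left _ _ (Ideal.subset_span ?_)
        rcases hi with rfl | rfl
        · exact Set.mem_insert _ _
        · exact Set.mem_insert_of_mem _ rfl
      · rw [if_neg hi]
        have e : p * X i - BEI.sub0 v p * X i = (p - BEI.sub0 v p) * X i := by ring
        rw [e]; exact Ideal.mul_mem_right _ _ hp

lemma BEI.sub0_mem {v : Fin n} {H : SimpleGraph (Fin n)}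
    {f : MvPolynomial (Fin n ⊕ Fin n) K} (hf : f ∈ binomialEdgeIdeal K H) :
    BEI.sub0 v f ∈ binomialEdgeIdeal K H := by
  induction hf using Submodule.span_induction with
  | mem f hf =>
      obtain ⟨i, j, hij, hadj, rfl⟩ := hf
      by_cases hi : i = v
      · have e : BEI.sub0 (K := K) v
            (X (Sum.inl i) * X (Sum.inr j) - X (Sum.inl j) * X (Sum.inr i)) = 0 := by
          subst hi
          simp [map_sub, map_mul, BEI.sub0_X, hij.ne']
        rw [e]; exact zero_mem _
      · by_cases hj : j = v
        · have e : BEI.sub0 (K := K) v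
              (X (Sum.inl i) * X (Sum.inr j) - X (Sum.inl j) * X (Sum.inr i)) = 0 := by
            subst hj
            simp [map_sub, map_mul, BEI.sub0_X, hij.ne]
          rw [e]; exact zero_mem _
        · have e : BEI.sub0 (K := K) v
              (X (Sum.inl i) * X (Sum.inr j) - X (Sum.inl j) * X (Sum.inr i)) =
              X (Sum.inl i) * X (Sum.inr j) - X (Sum.inl j) * X (Sum.inr i) := by
            simp [map_sub, map_mul, BEI.sub0_X, hi, hj]
          rw [e]; exact Ideal.subset_span ⟨i, j, hij, hadj, rfl⟩
  | zero => rw [map_zero]; exact zero_mem _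
  | add x y hx hy ihx ihy => rw [map_add]; exact add_mem ihx ihy
  | smul c x hx ih =>
      rw [smul_eq_mul, map_mul]
      exact Ideal.mul_mem_left _ _ ih

variable {G : SimpleGraph (Fin n)} {v : Fin n}

local notation "Gv" => G ⊔ SimpleGraph.fromRel (fun u w => G.Adj v u ∧ G.Adj v w)

lemma BEI.key_mul {g : MvPolynomial (Fin n ⊕ Fin n) K}
    (hg : g ∈ binomialEdgeIdeal K Gv) :
    X (Sum.inl v) * g ∈ binomialEdgeIdeal K G ∧
      X (Sum.inr v) * g ∈ binomialEdgeIdeal K G := by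
  induction hg using Submodule.span_induction with
  | mem f hf =>
      obtain ⟨i, j, hij, hadj, rfl⟩ := hf
      rw [SimpleGraph.sup_adj] at hadj
      rcases hadj with h | h
      · exact ⟨Ideal.mul_mem_left _ _ (Ideal.subset_span ⟨i, j, hij, h, rfl⟩),
          Ideal.mul_mem_left _ _ (Ideal.subset_span ⟨i, j, hij, h, rfl⟩)⟩
      · rw [SimpleGraph.fromRel_adj] at h
        obtain ⟨hne, hr⟩ := h
        have hvi : G.Adj v i := by tauto
        have hvj : G.Adj v j := by tauto
        constructor
        · have e : (X (Sum.inl v) * (X (Sum.inl i) * X (Sum.inr j) -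
              X (Sum.inl j) * X (Sum.inr i)) : MvPolynomial (Fin n ⊕ Fin n) K) =
              X (Sum.inl i) * (X (Sum.inl v) * X (Sum.inr j) - X (Sum.inl j) * X (Sum.inr v)) -
              X (Sum.inl j) * (X (Sum.inl v) * X (Sum.inr i) - X (Sum.inl i) * X (Sum.inr v)) := by
            ring
          rw [e]
          exact sub_mem (Ideal.mul_mem_left _ _ (BEI.gen_mem hvj))
            (Ideal.mul_mem_left _ _ (BEI.gen_mem hvi))
        · have e : (X (Sum.inr v) * (X (Sum.inl i) * X (Sum.inr j) -
              X (Sum.inl j) * X (Sum.inr i)) : MvPolynomial (Fin n ⊕ Fin n) K) =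
              X (Sum.inr j) * (X (Sum.inl i) * X (Sum.inr v) - X (Sum.inl v) * X (Sum.inr i)) -
              X (Sum.inr i) * (X (Sum.inl j) * X (Sum.inr v) - X (Sum.inl v) * X (Sum.inr j)) := by
            ring
          rw [e]
          exact sub_mem (Ideal.mul_mem_left _ _ (BEI.gen_mem hvi.symm))
            (Ideal.mul_mem_left _ _ (BEI.gen_mem hvj.symm))
  | zero => constructor <;> · rw [mul_zero]; exact zero_mem _
  | add x y hx hy ihx ihy =>
      refine ⟨?_, ?_⟩
      · rw [mul_add]; exact add_mem ihx.1 ihy.1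
      · rw [mul_add]; exact add_mem ihx.2 ihy.2
  | smul c x hx ih =>
      rw [smul_eq_mul]
      refine ⟨?_, ?_⟩
      · rw [mul_left_comm]; exact Ideal.mul_mem_left _ _ ih.1
      · rw [mul_left_comm]; exact Ideal.mul_mem_left _ _ ih.2

lemma BEI.pair_mul {c g : MvPolynomial (Fin n ⊕ Fin n) K}
    (hc : c ∈ Ideal.span {X (Sum.inl v), X (Sum.inr v)})
    (hg : g ∈ binomialEdgeIdeal K Gv) :
    c * g ∈ binomialEdgeIdeal K G := by
  induction hc using Submodule.span_induction with
  | mem x hx =>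
      rcases hx with rfl | hx
      · exact (BEI.key_mul hg).1
      · rw [Set.mem_singleton_iff] at hx; subst hx
        exact (BEI.key_mul hg).2
  | zero => rw [zero_mul]; exact zero_mem _
  | add x y hx hy ihx ihy => rw [add_mul]; exact add_mem ihx ihy
  | smul a x hx ih =>
      rw [smul_eq_mul, mul_assoc]
      exact Ideal.mul_mem_left _ _ ih

lemma BEI.claimE {f : MvPolynomial (Fin n ⊕ Fin n) K}
    (hf : f ∈ binomialEdgeIdeal K Gv) :
    f - BEI.sub0 v f ∈ binomialEdgeIdeal K G := by
  induction hf using Submodule.span_induction with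
  | mem f hf =>
      obtain ⟨i, j, hij, hadj, rfl⟩ := hf
      by_cases hi : i = v
      · have hG : G.Adj i j := by
          subst hi
          rw [SimpleGraph.sup_adj] at hadj
          rcases hadj with h | h
          · exact h
          · rw [SimpleGraph.fromRel_adj] at h
            exact absurd (by tauto : G.Adj i i) (G.irrefl)
        have e : BEI.sub0 (K := K) v
            (X (Sum.inl i) * X (Sum.inr j) - X (Sum.inl j) * X (Sum.inr i)) = 0 := by
          subst hi
          simp [map_sub, map_mul, BEI.sub0_X, hij.ne']
        rw [e, sub_zero]
        exact Ideal.subset_span ⟨i, j, hij, hG, rfl⟩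
      · by_cases hj : j = v
        · have hG : G.Adj i j := by
            subst hj
            rw [SimpleGraph.sup_adj] at hadj
            rcases hadj with h | h
            · exact h
            · rw [SimpleGraph.fromRel_adj] at h
              exact absurd (by tauto : G.Adj j j) (G.irrefl)
          have e : BEI.sub0 (K := K) v
              (X (Sum.inl i) * X (Sum.inr j) - X (Sum.inl j) * X (Sum.inr i)) = 0 := by
            subst hj
            simp [map_sub, map_mul, BEI.sub0_X, hij.ne]
          rw [e, sub_zero]
          exact Ideal.subset_span ⟨i, j, hij, hG, rfl⟩
        · have e : BEI.sub0 (K := K) v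
              (X (Sum.inl i) * X (Sum.inr j) - X (Sum.inl j) * X (Sum.inr i)) =
              X (Sum.inl i) * X (Sum.inr j) - X (Sum.inl j) * X (Sum.inr i) := by
            simp [map_sub, map_mul, BEI.sub0_X, hi, hj]
          rw [e, sub_self]; exact zero_mem _
  | zero => rw [map_zero, sub_zero]; exact zero_mem _
  | add x y hx hy ihx ihy =>
      have e : x + y - BEI.sub0 v (x + y) =
          (x - BEI.sub0 v x) + (y - BEI.sub0 v y) := by rw [map_add]; ring
      rw [e]; exact add_mem ihx ihy
  | smul c x hx ih =>
      have e : c • x - BEI.sub0 v (c • x) =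
          c * (x - BEI.sub0 v x) + (c - BEI.sub0 v c) * BEI.sub0 v x := by
        rw [smul_eq_mul, map_mul]; ring
      rw [e]
      exact add_mem (Ideal.mul_mem_left _ _ ih)
        (BEI.pair_mul (BEI.sub_sub0_mem v c) (BEI.sub0_mem hx))

end Aux

/-- Ohtani's lemma: if `v` is a non-simplicial vertex of `G` (some two neighbors of `v` are
non-adjacent), then `J_G = (J_{G∖v} + (x_v, y_v)) ∩ J_{G_v}`, where `G_v` is obtained from `G`
by joining all pairs of neighbors of `v`, and `J_{G∖v}` is generated by the binomials of the
edges of `G` not incident to `v`. -/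
theorem binomialEdgeIdeal_eq_inter {K : Type} [Field K] {n : ℕ} (G : SimpleGraph (Fin n))
    (v : Fin n)
    (hv : ∃ u w : Fin n, G.Adj v u ∧ G.Adj v w ∧ u ≠ w ∧ ¬ G.Adj u w) :
    binomialEdgeIdeal K G =
      (binomialEdgeIdeal K (G.deleteEdges (G.incidenceSet v)) +
          Ideal.span {X (Sum.inl v), X (Sum.inr v)}) ⊓
        binomialEdgeIdeal K (G ⊔ SimpleGraph.fromRel (fun u w => G.Adj v u ∧ G.Adj v w)) := by
  have hdel_le : binomialEdgeIdeal K (G.deleteEdges (G.incidenceSet v)) ≤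
      binomialEdgeIdeal K G := by
    apply Ideal.span_mono
    rintro f ⟨i, j, hij, hadj, rfl⟩
    exact ⟨i, j, hij, (SimpleGraph.deleteEdges_adj.mp hadj).1, rfl⟩
  have hG_le_Gv : binomialEdgeIdeal K G ≤
      binomialEdgeIdeal K (G ⊔ SimpleGraph.fromRel (fun u w => G.Adj v u ∧ G.Adj v w)) := by
    apply Ideal.span_mono
    rintro f ⟨i, j, hij, hadj, rfl⟩
    exact ⟨i, j, hij, (SimpleGraph.sup_adj _ _ _ _).mpr (Or.inl hadj), rfl⟩
  apply le_antisymm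
  · apply le_inf _ hG_le_Gv
    rw [binomialEdgeIdeal, Ideal.span_le]
    rintro f ⟨i, j, hij, hadj, rfl⟩
    rw [SetLike.mem_coe, Ideal.add_eq_sup]
    by_cases hi : i = v
    · subst hi
      apply Ideal.mem_sup_right
      exact sub_mem
        (Ideal.mul_mem_right _ _ (Ideal.subset_span (Set.mem_insert _ _)))
        (Ideal.mul_mem_left _ _ (Ideal.subset_span (Set.mem_insert_of_mem _ rfl)))
    · by_cases hj : j = v
      · subst hj
        apply Ideal.mem_sup_right
        exact sub_mem
          (Ideal.mul_mem_left _ _ (Ideal.subset_span (Set.mem_insert_of_mem _ rfl)))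
          (Ideal.mul_mem_right _ _ (Ideal.subset_span (Set.mem_insert _ _)))
      · apply Ideal.mem_sup_left
        refine Ideal.subset_span ⟨i, j, hij, ?_, rfl⟩
        rw [SimpleGraph.deleteEdges_adj]
        refine ⟨hadj, fun hmem => ?_⟩
        have hvmem : v ∈ (s(i, j) : Sym2 (Fin n)) := hmem.2
        rw [Sym2.mem_iff] at hvmem
        rcases hvmem with rfl | rfl
        · exact hi rfl
        · exact hj rfl
  · rintro f hf
    rw [Submodule.mem_inf] at hf
    obtain ⟨hf1, hf2⟩ := hf
    rw [Ideal.add_eq_sup, Submodule.mem_sup] at hf1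
    obtain ⟨g, hg, h, hh, rfl⟩ := hf1
    have hhGv : h ∈ binomialEdgeIdeal K
        (G ⊔ SimpleGraph.fromRel (fun u w => G.Adj v u ∧ G.Adj v w)) := by
      have e : h = (g + h) - g := by ring
      rw [e]
      exact sub_mem hf2 (hG_le_Gv (hdel_le hg))
    have hσh : BEI.sub0 v h = 0 := by
      have hker : Ideal.span {X (Sum.inl v), X (Sum.inr v)} ≤
          RingHom.ker (BEI.sub0 (K := K) v).toRingHom := by
        rw [Ideal.span_le]
        rintro x hx
        rw [SetLike.mem_coe, RingHom.mem_ker]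
        rcases hx with rfl | hx
        · simp [BEI.sub0_X]
        · rw [Set.mem_singleton_iff] at hx; subst hx
          simp [BEI.sub0_X]
      exact RingHom.mem_ker.mp (hker hh)
    have hmain := BEI.claimE (G := G) (v := v) hhGv
    rw [hσh, sub_zero] at hmain
    exact add_mem (hdel_le hg) hmain
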